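/- If b is a bounded complex-valued para-accretive function on ℝⁿ, then 1/b is essentially bounded; that is, there exists a constant c > 0 such that |b(x)| ≥ c for almost every x ∈ ℝⁿ. -/

import Mathlib

/-!
If `|b| < C / 2` on a set `E` of positive measure, take a Lebesgue density point of `E`: in a
small cube `Q` around it, `E` fills all of `Q` up to a proportion `ε`. For any `Q' ⊆ Q` the
integral of `b` over `Q'` is then at most `(C / 2) |Q| + B ε |Q| < C |Q|` once `ε` is small,
contradicting para-accretivity on `Q`.
-/

open MeasureTheory Metric

open Filter Topology in
theorem Besicovitch.exists_closedBall_measureReal_sdiff_lt {β : Type*} [MetricSpace β]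
    [SecondCountableTopology β] [MeasurableSpace β] [BorelSpace β] [HasBesicovitchCovering β]
    (μ : Measure β) [IsLocallyFiniteMeasure μ] {E : Set β} (hE : MeasurableSet E)
    (hE0 : μ E ≠ 0) {ε : ℝ} (hε : 0 < ε) :
    ∃ x r, 0 < r ∧ μ.real (closedBall x r \ E) < ε * μ.real (closedBall x r) := by
  have hdens : ∀ᵐ x ∂μ.restrict E,
      Tendsto (fun r => μ (E ∩ closedBall x r) / μ (closedBall x r)) (𝓝[>] 0) (𝓝 1) := by
    rw [ae_restrict_iff' hE]
    filter_upwards [ae_tendsto_measure_inter_div_of_measurableSet μ hE] with x hx hxE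
    simpa [hxE] using hx
  have := ae_restrict_neBot.2 hE0
  obtain ⟨x, hx⟩ := hdens.exists
  have hlt1 : ENNReal.ofReal (1 - ε) < 1 := by
    rw [← ENNReal.ofReal_one]
    exact (ENNReal.ofReal_lt_ofReal_iff one_pos).2 (by linarith)
  obtain ⟨r, hlt, hr⟩ := ((hx.eventually (lt_mem_nhds hlt1)).and self_mem_nhdsWithin).exists
  refine ⟨x, r, hr, ?_⟩
  set B := closedBall x r
  -- A positive density ratio rules out `μ B = 0` and `μ B = ∞`.
  have hB0 : μ B ≠ 0 := fun h => by
    simp [h, measure_mono_null Set.inter_subset_right h] at hlt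
  have hBtop : μ B ≠ ⊤ := fun h => by simp [h] at hlt
  rw [ENNReal.lt_div_iff_mul_lt (Or.inl hB0) (Or.inl hBtop)] at hlt
  have hEB : (1 - ε) * μ.real B < μ.real (B ∩ E) := calc
    (1 - ε) * μ.real B ≤ (ENNReal.ofReal (1 - ε) * μ B).toReal := by
      rw [ENNReal.toReal_mul, ENNReal.toReal_ofReal']
      exact mul_le_mul_of_nonneg_right (le_max_left _ _) measureReal_nonneg
    _ < μ.real (B ∩ E) := by
      rw [Set.inter_comm]
      exact (ENNReal.toReal_lt_toReal (by finiteness)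
        (measure_ne_top_of_subset Set.inter_subset_right hBtop)).2 hlt
  linarith [measureReal_inter_add_sdiff (μ := μ) (s := B) hE hBtop]

section SetIntegral

variable {α F : Type*} [MeasurableSpace α] [NormedAddCommGroup F] [NormedSpace ℝ F]
  {μ : Measure α} {f : α → F} {s t u : Set α} {a M : ℝ}

theorem norm_setIntegral_le_of_norm_le_on_inter (hf : AEStronglyMeasurable f μ)
    (hs : MeasurableSet s) (hμs : μ s < ⊤) (ht : MeasurableSet t)
    (hfs : ∀ x ∈ s, ‖f x‖ ≤ M) (hft : ∀ x ∈ s ∩ t, ‖f x‖ ≤ a) :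
    ‖∫ x in s, f x ∂μ‖ ≤ a * μ.real (s ∩ t) + M * μ.real (s \ t) := by
  have hint : IntegrableOn f s μ :=
    Measure.integrableOn_of_bounded hμs.ne hf (ae_restrict_of_forall_mem hs hfs)
  rw [← integral_inter_add_sdiff ht hint]
  calc _ ≤ ‖∫ x in s ∩ t, f x ∂μ‖ + ‖∫ x in s \ t, f x ∂μ‖ := norm_add_le _ _
    _ ≤ _ := add_le_add
      (norm_setIntegral_le_of_norm_le_const (measure_inter_lt_top_of_left_ne_top hμs.ne) hft)
      (norm_setIntegral_le_of_norm_le_const ((measure_mono Set.sdiff_subset).trans_lt hμs)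
        fun x hx => hfs x hx.1)

theorem norm_setIntegral_le_of_subset_of_norm_le_on_inter (ha : 0 ≤ a) (hM : 0 ≤ M)
    (hf : AEStronglyMeasurable f μ) (hs : MeasurableSet s) (hsu : s ⊆ u) (hμu : μ u ≠ ⊤)
    (ht : MeasurableSet t) (hfs : ∀ x ∈ s, ‖f x‖ ≤ M) (hft : ∀ x ∈ s ∩ t, ‖f x‖ ≤ a) :
    ‖∫ x in s, f x ∂μ‖ ≤ a * μ.real u + M * μ.real (u \ t) := by
  refine (norm_setIntegral_le_of_norm_le_on_inter hf hs
    ((measure_mono hsu).trans_lt hμu.lt_top) ht hfs hft).trans ?_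
  gcongr
  · exact Set.inter_subset_left.trans hsu
  · exact measure_ne_top_of_subset Set.sdiff_subset hμu

end SetIntegral

theorem tb_product_para_accretive_essentially_bounded_below
    (n : ℕ) (b : (Fin n → ℝ) → ℂ) (hmeas : Measurable b)
    (B : ℝ) (hB : ∀ x, ‖b x‖ ≤ B)
    (C γ : ℝ) (hC : 0 < C)
    (hpara : ∀ (x : Fin n → ℝ) (r : ℝ), 0 < r →
      ∃ Q' : Set (Fin n → ℝ), MeasurableSet Q' ∧ Q' ⊆ closedBall x r ∧
        γ * (volume (closedBall x r)).toReal ≤ (volume Q').toReal ∧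
        C ≤ ((volume (closedBall x r)).toReal)⁻¹ * ‖∫ y in Q', b y‖) :
    ∃ c : ℝ, 0 < c ∧ ∀ᵐ x ∂(volume : Measure (Fin n → ℝ)), c ≤ ‖b x‖ := by
  refine ⟨C / 2, half_pos hC, ?_⟩
  simp only [ae_iff, not_le]
  by_contra hE0
  set E := {x | ‖b x‖ < C / 2}
  have hE : MeasurableSet E := measurableSet_lt hmeas.norm measurable_const
  have hB0 : 0 ≤ B := (norm_nonneg _).trans (hB 0)
  obtain ⟨x, r, hr, hQE⟩ := Besicovitch.exists_closedBall_measureReal_sdiff_lt volume hE hE0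
    (ε := C / (2 * (B + 1))) (by positivity)
  set Q := closedBall x r
  have hQ : 0 < volume.real Q :=
    ENNReal.toReal_pos (measure_closedBall_pos _ _ hr).ne' measure_closedBall_lt_top.ne
  have hsmall : (B + 1) * volume.real (Q \ E) < C / 2 * volume.real Q := calc
    _ < (B + 1) * (C / (2 * (B + 1)) * volume.real Q) := by gcongr
    _ = C / 2 * volume.real Q := by field_simp
  obtain ⟨Q', hQ'm, hQ'Q, -, hQ'⟩ := hpara x r hr
  have hint := norm_setIntegral_le_of_subset_of_norm_le_on_inter (half_pos hC).le hB0
    hmeas.aestronglyMeasurable hQ'm hQ'Q (measure_closedBall_lt_top (μ := volume)).ne hE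
    (fun y _ => hB y) (fun y hy => hy.2.le)
  change C ≤ (volume.real Q)⁻¹ * _ at hQ'
  rw [le_inv_mul_iff₀ hQ] at hQ'
  linarith [measureReal_nonneg (μ := volume) (s := Q \ E)]
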